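/- For n > 2 odd and k ≥ ⌊n/2⌋, every radio-k-labeling of C_n has span at least ⌈(3k+3−n)/2⌉ · (n−1)/2. Hence rn_k(C_n) ≥ ⌈(3k+3−n)/2⌉·(n−1)/2. -/

import Mathlib

/-- Distance between two vertices of the cycle `C_n` (vertices are `Fin n`). -/
def cycleDist (n : ℕ) (u v : Fin n) : ℕ := min (v - u).val (u - v).val

/-- A radio-`k`-labeling of the cycle `C_n`. -/
def IsRadioLabeling (n k : ℕ) (f : Fin n → ℕ) : Prop :=
  ∀ u v : Fin n, u ≠ v → (k : ℤ) + 1 - cycleDist n u v ≤ |(f u : ℤ) - (f v : ℤ)|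

/-- The span of a labeling: largest label minus smallest label. -/
def spanOf (n : ℕ) (f : Fin n → ℕ) : ℕ :=
  Finset.univ.sup fun u => Finset.univ.sup fun v => f u - f v

/-- The radio-`k`-number of `C_n`: minimum span over all radio-`k`-labelings. -/
noncomputable def rn (n k : ℕ) : ℕ :=
  sInf {s | ∃ f : Fin n → ℕ, IsRadioLabeling n k f ∧ spanOf n f = s}

lemma dvd_of_sum_eq_zero {n : ℕ} [NeZero n] {x y : Fin n} (h : x + y = 0) :
    n ∣ (x.val + y.val) := by
  have h1 := congrArg Fin.val h
  rw [Fin.val_add, Fin.val_zero] at h1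
  exact Nat.dvd_of_mod_eq_zero h1

lemma dvd_of_sum3_eq_zero {n : ℕ} [NeZero n] {x y z : Fin n} (h : x + y + z = 0) :
    n ∣ (x.val + y.val + z.val) := by
  have h1 := congrArg Fin.val h
  rw [Fin.val_add, Fin.val_add, Fin.val_zero, Nat.mod_add_mod] at h1
  exact Nat.dvd_of_mod_eq_zero h1

lemma valsum {n : ℕ} [NeZero n] {u v : Fin n} (h : u ≠ v) :
    (v - u).val + (u - v).val = n := by
  obtain ⟨q, hq⟩ := dvd_of_sum_eq_zero (x := v - u) (y := u - v) (by abel)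
  have h3 : (v - u).val ≠ 0 := by
    intro h0; exact sub_ne_zero.mpr (Ne.symm h) (Fin.ext (by rw [h0]; simp))
  have b1 := (v - u).isLt
  have b2 := (u - v).isLt
  have hq2 : q < 2 := by nlinarith
  interval_cases q <;> omega

lemma tri {n : ℕ} [NeZero n] {u v w : Fin n} (huv : u ≠ v) (hvw : v ≠ w) (huw : u ≠ w) :
    cycleDist n u v + cycleDist n v w + cycleDist n u w ≤ n := by
  have s1 := valsum huv
  have s2 := valsum hvw
  have s3 := valsum huw
  obtain ⟨q, hq⟩ := dvd_of_sum3_eq_zero (x := v - u) (y := w - v) (z := u - w) (by abel)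
  have h2 : (v - u).val ≠ 0 := by
    intro h0; exact sub_ne_zero.mpr (Ne.symm huv) (Fin.ext (by rw [h0]; simp))
  have h3 : (w - v).val ≠ 0 := by
    intro h0; exact sub_ne_zero.mpr (Ne.symm hvw) (Fin.ext (by rw [h0]; simp))
  have h4 : (u - w).val ≠ 0 := by
    intro h0; exact sub_ne_zero.mpr huw (Fin.ext (by rw [h0]; simp))
  have b1 := (v - u).isLt
  have b2 := (w - v).isLt
  have b3 := (u - w).isLt
  have hq2 : q < 3 := by nlinarith
  unfold cycleDist
  interval_cases q <;> omega

lemma span_ge (n : ℕ) (f : Fin n → ℕ) (a b : Fin n) : f a - f b ≤ spanOf n f := by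
  unfold spanOf
  exact le_trans (Finset.le_sup (f := fun v => f a - f v) (Finset.mem_univ b))
    (Finset.le_sup (f := fun u => Finset.univ.sup fun v => f u - f v) (Finset.mem_univ a))

lemma lower_bound (n k : ℕ) (hn : 2 < n) (ho : Odd n) (_hk : n / 2 ≤ k)
    (f : Fin n → ℕ) (hf : IsRadioLabeling n k f) :
    (3 * k + 4 - n) / 2 * ((n - 1) / 2) ≤ spanOf n f := by
  have hnz : NeZero n := ⟨by omega⟩
  obtain ⟨t, ht⟩ := ho
  set σ := Tuple.sort f with hσ
  have hmono : Monotone (f ∘ σ) := Tuple.monotone_sort f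
  set M : ℕ := (3 * k + 4 - n) / 2 with hM
  -- key step: gap of M every two steps in the sorted order
  have key : ∀ i : ℕ, (h : i + 2 < n) →
      (M : ℤ) ≤ (f (σ ⟨i + 2, h⟩) : ℤ) - f (σ ⟨i, by omega⟩) := by
    intro i h
    set u := σ ⟨i, by omega⟩ with hu
    set v := σ ⟨i + 1, by omega⟩ with hv
    set w := σ ⟨i + 2, h⟩ with hw
    have huv : u ≠ v := by
      simp only [hu, hv, ne_eq, EmbeddingLike.apply_eq_iff_eq, Fin.mk.injEq]; omega
    have hvw : v ≠ w := by
      simp only [hv, hw, ne_eq, EmbeddingLike.apply_eq_iff_eq, Fin.mk.injEq]; omega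
    have huw : u ≠ w := by
      simp only [hu, hw, ne_eq, EmbeddingLike.apply_eq_iff_eq, Fin.mk.injEq]; omega
    have m1 : f u ≤ f v := hmono (by simp [Fin.mk_le_mk])
    have m2 : f v ≤ f w := hmono (by simp [Fin.mk_le_mk])
    have m3 : f u ≤ f w := le_trans m1 m2
    have h1 := hf u v huv
    have h2 := hf v w hvw
    have h3 := hf u w huw
    rw [abs_sub_comm, abs_of_nonneg (sub_nonneg.mpr (by exact_mod_cast m1))] at h1
    rw [abs_sub_comm, abs_of_nonneg (sub_nonneg.mpr (by exact_mod_cast m2))] at h2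
    rw [abs_sub_comm, abs_of_nonneg (sub_nonneg.mpr (by exact_mod_cast m3))] at h3
    have htri := tri huv hvw huw
    omega
  -- chain the gaps
  have step : ∀ j : ℕ, (h : 2 * j < n) →
      ((j * M : ℕ) : ℤ) ≤ (f (σ ⟨2 * j, h⟩) : ℤ) - f (σ ⟨0, by omega⟩) := by
    intro j
    induction j with
    | zero => intro h; simp
    | succ j ih =>
      intro h
      have h2j : 2 * j + 2 < n := by omega
      have e : (⟨2 * (j + 1), h⟩ : Fin n) = ⟨2 * j + 2, h2j⟩ := by
        simp [Fin.ext_iff]; ring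
      rw [e]
      have := key (2 * j) h2j
      have := ih (by omega)
      push_cast
      push_cast at this
      linarith
  have hlast := step ((n - 1) / 2) (by omega)
  have := span_ge n f (σ ⟨2 * ((n - 1) / 2), by omega⟩) (σ ⟨0, by omega⟩)
  have hM2 : M * ((n - 1) / 2) = (n - 1) / 2 * M := Nat.mul_comm _ _
  rw [hM2]
  omega

lemma exists_labeling (n k : ℕ) : IsRadioLabeling n k (fun i : Fin n => i.val * (k + 1)) := by
  intro u v huv
  have hval : (u.val : ℤ) ≠ v.val := by
    simpa [Fin.ext_iff] using huv
  have h1 : 1 ≤ |(u.val : ℤ) - v.val| := Int.one_le_abs (sub_ne_zero.mpr hval)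
  have h2 : |((u.val * (k + 1) : ℕ) : ℤ) - ((v.val * (k + 1) : ℕ) : ℤ)|
      = |(u.val : ℤ) - v.val| * (k + 1) := by
    rw [show ((u.val * (k + 1) : ℕ) : ℤ) - ((v.val * (k + 1) : ℕ) : ℤ)
        = ((u.val : ℤ) - v.val) * (k + 1) by push_cast; ring, abs_mul]
    rw [show |((k : ℤ) + 1)| = (k : ℤ) + 1 from abs_of_nonneg (by positivity)]
  simp only [h2]
  have h3 : (k : ℤ) + 1 ≤ |(u.val : ℤ) - v.val| * (k + 1) := by nlinarith
  have h4 : (0 : ℤ) ≤ (cycleDist n u v : ℤ) := by positivity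
  linarith

/-- lower bound for the span of radio-k-labelings of `C_n`, `n` odd. -/
theorem stmt6 (n k : ℕ) (hn : 2 < n) (ho : Odd n) (hk : n / 2 ≤ k) :
    (∀ f : Fin n → ℕ, IsRadioLabeling n k f →
      (3 * k + 4 - n) / 2 * ((n - 1) / 2) ≤ spanOf n f) ∧
    (3 * k + 4 - n) / 2 * ((n - 1) / 2) ≤ rn n k := by
  refine ⟨fun f hf => lower_bound n k hn ho hk f hf, ?_⟩
  have hne : {s | ∃ f : Fin n → ℕ, IsRadioLabeling n k f ∧ spanOf n f = s}.Nonempty :=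
    ⟨_, _, exists_labeling n k, rfl⟩
  obtain ⟨f, hf, hspan⟩ := Nat.sInf_mem hne
  rw [rn, ← hspan]
  exact lower_bound n k hn ho hk f hf
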